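/- Let (z_j)_{j≥0} be a strictly increasing sequence with z_0=0, z_1=1/2, z_j ↗ 1, set λ_j := z_{j+1} − z_j and s_j := (1 − 2^{-j})/λ_j, and assume inf_{j≥1} s_j > 1. Let T:[0,1)→[0,1) be defined by Tx = 2x on [0,1/2) and, for each j ≥ 1, by the decreasing affine bijection from Z_j := [z_j, z_{j+1}) onto [2^{-j}, 1). Let Y_j := [2^{-(j+1)}, 2^{-j}) for j ≥ 0, and let μ ≪ λ be a T-invariant probability measure whose density has a version constant on each Y_j. If there is k_0 ≥ 1 such that λ_{i+1} ≤ 2^{-(i+3)} λ_i for all i ≥ k_0, then μ(Y_{k+1}) ≤ 2^{-(k+1)} μ(Y_k) for all k ≥ k_0, and consequently Σ_{j>k} μ(Y_j) = o(μ(Y_k)) as k → ∞. -/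

import Mathlib

open MeasureTheory Filter Set Topology
open scoped ENNReal

/-- First hitting time `φ_E` (values in `ℝ≥0∞`; `∞` if the orbit never hits `E`). -/
noncomputable def hitTime {X : Type*} (T : X → X) (E : Set X) (x : X) : ℝ≥0∞ :=
  sInf {t : ℝ≥0∞ | ∃ n : ℕ, 1 ≤ n ∧ T^[n] x ∈ E ∧ t = (n : ℝ≥0∞)}

/-- First hitting time, `ℕ`-valued (junk value `0` if the orbit never hits `E`). -/
noncomputable def hitN {X : Type*} (T : X → X) (E : Set X) (x : X) : ℕ :=
  sInf {n : ℕ | 1 ≤ n ∧ T^[n] x ∈ E}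

/-- First return map `T_Y`. -/
noncomputable def returnMap {X : Type*} (T : X → X) (Y : Set X) (x : X) : X :=
  T^[hitN T Y x] x

/-- Normalized restriction `μ_Y = μ(Y)⁻¹ μ(Y ∩ ·)`. -/
noncomputable def condMeas {X : Type*} [MeasurableSpace X] (μ : Measure X) (Y : Set X) :
    Measure X := (μ Y)⁻¹ • μ.restrict Y

/-- Convergence in distribution, at continuity points of the limit distribution function,
of `[0,∞]`-valued random variables `f k` on `(X, ν)` to a random variable `R` on `(Ω, P)`. -/
def TendstoInDistrib {X Ω : Type*} [MeasurableSpace X] [MeasurableSpace Ω]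
    (ν : Measure X) (f : ℕ → X → ℝ≥0∞) (P : Measure Ω) (R : Ω → ℝ≥0∞) : Prop :=
  ∀ t : ℝ, ContinuousAt (fun s : ℝ => (P {ω | R ω ≤ ENNReal.ofReal s}).toReal) t →
    Tendsto (fun k => (ν {x | f k x ≤ ENNReal.ofReal t}).toReal) atTop
      (𝓝 ((P {ω | R ω ≤ ENNReal.ofReal t}).toReal))

/-- `f k → ∞` in `ν`-measure. -/
def TendstoInfInMeasure {X : Type*} [MeasurableSpace X] (ν : Measure X)
    (f : ℕ → X → ℝ≥0∞) : Prop :=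
  ∀ N : ℕ, 1 ≤ N → Tendsto (fun k => ν {x | f k x ≤ (N : ℝ≥0∞)}) atTop (𝓝 0)

/-- Points of `Y` can only reach `E` via `E'`. -/
def OnlyReachVia {X : Type*} [MeasurableSpace X] (μ : Measure X) (T : X → X)
    (Y E E' : Set X) : Prop :=
  ∀ n : ℕ, ∀ᵐ x ∂μ.restrict Y, T^[n] x ∈ E → ∃ j ≤ n, T^[j] x ∈ E'

/-- The dyadic interval `Y_j = [2^{-(j+1)}, 2^{-j})`. -/
noncomputable def Yset (j : ℕ) : Set ℝ :=
  Set.Ico ((2 : ℝ) ^ (-(j : ℤ) - 1)) ((2 : ℝ) ^ (-(j : ℤ)))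

/-- The slope `s_j = (1 - 2^{-j})/(z_{j+1} - z_j)`. -/
noncomputable def slopeZ (z : ℕ → ℝ) (j : ℕ) : ℝ :=
  (1 - (2 : ℝ) ^ (-(j : ℤ))) / (z (j + 1) - z j)

/-!
Write `a = 2^{-k}` and `λ_i = z_{i+1} - z_i`. On `Y_0 = [1/2, 1)`, which contains every branch
`Z_i` with `i ≥ 1`, the measure `μ` has constant density `η_0`. By invariance,
`μ(Y_k) = μ(T⁻¹ Y_k)`, and `T⁻¹ Y_k` contains the right end of `Z_{k+1}` of length `a λ_{k+1} / 2`,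
so `μ(Y_k) ≥ η_0 a λ_{k+1} / 2`. Conversely `μ[0, a/2) = μ(T⁻¹[0, a/2))`, and up to the null set
`{z_j}` this preimage is `[0, a/4)` together with, for each `i ≥ k + 2`, a right end of `Z_i` of
length at most `a λ_i`; subtracting `μ[0, a/4)` gives `μ(Y_{k+1}) ≤ η_0 a ∑_{i ≥ k+2} λ_i`.
Under the decay hypothesis this sum is at most `2 λ_{k+2} ≤ 2^{-(k+3)} λ_{k+1}`, and comparing the
two bounds gives `μ(Y_{k+1}) ≤ 2^{-(k+2)} μ(Y_k)`. Summing a geometric series then gives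
`∑_{j > k} μ(Y_j) ≤ 2 μ(Y_{k+1}) ≤ 2^{-k} μ(Y_k)`.
-/

namespace ENNReal

lemma tsum_le_two_mul_of_le_inv_two_mul {f : ℕ → ℝ≥0∞} (hf : ∀ n, f (n + 1) ≤ 2⁻¹ * f n) :
    ∑' n, f n ≤ 2 * f 0 := by
  have hgeom : ∀ n, f n ≤ 2⁻¹ ^ n * f 0 := by
    intro n
    induction n with
    | zero => simp
    | succ n ih =>
      calc f (n + 1) ≤ 2⁻¹ * f n := hf n
        _ ≤ 2⁻¹ * (2⁻¹ ^ n * f 0) := by gcongr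
        _ = 2⁻¹ ^ (n + 1) * f 0 := by ring
  calc ∑' n, f n ≤ ∑' n, 2⁻¹ ^ n * f 0 := ENNReal.tsum_le_tsum hgeom
    _ = 2 * f 0 := by
      rw [ENNReal.tsum_mul_right, ENNReal.tsum_geometric, ENNReal.one_sub_inv_two, inv_inv]

lemma two_mul_inv_two_pow_succ_mul (n : ℕ) (x : ℝ≥0∞) : 2 * (2⁻¹ ^ (n + 1) * x) = 2⁻¹ ^ n * x := by
  rw [pow_succ, mul_comm (2⁻¹ ^ n), ← mul_assoc, ← mul_assoc,
    ENNReal.mul_inv_cancel two_ne_zero ofNat_ne_top, one_mul]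

lemma ofReal_two_zpow_neg (n : ℕ) : ENNReal.ofReal ((2 : ℝ) ^ (-(n : ℤ))) = 2⁻¹ ^ n := by
  rw [zpow_neg, zpow_natCast, ← inv_pow, ENNReal.ofReal_pow (by norm_num),
    ENNReal.ofReal_inv_of_pos two_pos, ENNReal.ofReal_ofNat]

lemma toReal_div_toReal_le_toReal {a b c : ℝ≥0∞} (hc : c ≠ ∞) (h : a ≤ c * b) :
    a.toReal / b.toReal ≤ c.toReal := by
  rw [← ENNReal.toReal_div]
  exact ENNReal.toReal_mono hc (ENNReal.div_le_of_le_mul h)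

lemma tendsto_tsum_tail_div_of_le_inv_two_pow_mul {f : ℕ → ℝ≥0∞} {k0 : ℕ}
    (hf : ∀ j, k0 ≤ j → f (j + 1) ≤ 2⁻¹ ^ (j + 1) * f j) :
    Tendsto (fun k => (∑' j, if k < j then f j else 0).toReal / (f k).toReal) atTop (𝓝 0) := by
  have htail : ∀ k, k0 ≤ k → ∑' j, (if k < j then f j else 0) ≤ 2⁻¹ ^ k * f k := by
    intro k hk
    calc ∑' j, (if k < j then f j else 0) = ∑' r, f (k + 1 + r) := by
          rw [← ENNReal.summable.sum_add_tsum_nat_add' (k := k + 1),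
            Finset.sum_eq_zero fun j hj => if_neg (by simp at hj; omega), zero_add]
          exact tsum_congr fun r => by rw [if_pos (by omega), add_comm]
      _ ≤ 2 * f (k + 1) := tsum_le_two_mul_of_le_inv_two_mul fun r =>
          (hf (k + 1 + r) (by omega)).trans <| by
            gcongr
            simpa using pow_le_pow_right_of_le_one' (a := (2⁻¹ : ℝ≥0∞)) (by norm_num)
              (Nat.le_add_left 1 (k + 1 + r))
      _ ≤ 2 * (2⁻¹ ^ (k + 1) * f k) := by gcongr; exact hf k hk
      _ = 2⁻¹ ^ k * f k := two_mul_inv_two_pow_succ_mul k (f k)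
  refine squeeze_zero' (Eventually.of_forall fun k => by positivity)
    (eventually_atTop.2 ⟨k0, fun k hk => toReal_div_toReal_le_toReal (by simp) (htail k hk)⟩) ?_
  simpa using
    _root_.tendsto_pow_atTop_nhds_zero_of_lt_one (r := (2⁻¹ : ℝ)) (by norm_num) (by norm_num)

end ENNReal

lemma two_zpow_neg_sub_one (k : ℕ) : (2 : ℝ) ^ (-(k : ℤ) - 1) = 2 ^ (-(k : ℤ)) / 2 := by
  rw [zpow_sub₀ two_ne_zero, zpow_one]

lemma two_zpow_neg_succ (k : ℕ) : (2 : ℝ) ^ (-((k + 1 : ℕ) : ℤ)) = 2 ^ (-(k : ℤ)) / 2 := by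
  rw [← two_zpow_neg_sub_one]; push_cast; ring_nf

lemma measurableSet_Yset (k : ℕ) : MeasurableSet (Yset k) := measurableSet_Ico

lemma Yset_zero : Yset 0 = Ico (1 / 2) 1 := by norm_num [Yset]

lemma Yset_eq (k : ℕ) : Yset k = Ico (2 ^ (-(k : ℤ)) / 2) (2 ^ (-(k : ℤ))) := by
  rw [Yset, two_zpow_neg_sub_one]

lemma Yset_succ_eq (k : ℕ) : Yset (k + 1) = Ico (2 ^ (-(k : ℤ)) / 4) (2 ^ (-(k : ℤ)) / 2) := by
  rw [Yset_eq, two_zpow_neg_succ]; ring_nf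

section AffineBranch

variable {p q b x : ℝ}

lemma lt_one_sub_div_mul_sub (hpq : p < q) (hb : b < 1) (hxq : x < q) :
    b < 1 - (1 - b) / (q - p) * (x - p) := by
  have : (1 - b) / (q - p) * (x - p) < 1 - b := by
    rw [div_mul_eq_mul_div, div_lt_iff₀ (sub_pos.2 hpq)]
    exact mul_lt_mul_of_pos_left (by linarith) (by linarith)
  linarith

lemma one_sub_div_mul_sub_lt_iff (hpq : p < q) (hb : b < 1) {c : ℝ} :
    1 - (1 - b) / (q - p) * (x - p) < c ↔ q - (q - p) * (c - b) / (1 - b) < x := by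
  rw [div_mul_eq_mul_div, sub_lt_comm, lt_div_iff₀ (sub_pos.2 hpq), sub_lt_comm,
    lt_div_iff₀ (sub_pos.2 hb)]
  constructor <;> intro h <;> linarith

end AffineBranch

lemma exists_mem_Ico_of_tendsto {z : ℕ → ℝ} {L x : ℝ} (hzL : Tendsto z atTop (𝓝 L))
    (h0 : z 0 ≤ x) (hxL : x < L) : ∃ i, x ∈ Ico (z i) (z (i + 1)) := by
  have hex : ∃ n, x < z n := (hzL.eventually (eventually_gt_nhds hxL)).exists
  have hpos : Nat.find hex ≠ 0 := fun h => (h ▸ Nat.find_spec hex).not_ge h0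
  refine ⟨Nat.find hex - 1, not_lt.1 (Nat.find_min hex (by omega)), ?_⟩
  rw [Nat.sub_add_cancel (Nat.pos_of_ne_zero hpos)]
  exact Nat.find_spec hex

def branchEnd (z : ℕ → ℝ) (c : ℝ) (i : ℕ) : Set ℝ :=
  Ioo (z (i + 1) - c * (z (i + 1) - z i)) (z (i + 1))

section Branches

variable {z : ℕ → ℝ} {T : ℝ → ℝ} {μ : Measure ℝ} {η : ℕ → ℝ≥0∞}

lemma branchEnd_subset_Ioo (hz : Monotone z) {c : ℝ} (hc : c ≤ 1) (i : ℕ) :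
    branchEnd z c i ⊆ Ioo (z i) (z (i + 1)) := by
  intro x hx
  have : c * (z (i + 1) - z i) ≤ z (i + 1) - z i :=
    mul_le_of_le_one_left (sub_nonneg.2 (hz i.le_succ)) hc
  exact ⟨by linarith [hx.1], hx.2⟩

lemma Ioo_subset_Yset_zero (hz : Monotone z) (hz1 : z 1 = 1 / 2) (hzlt : ∀ j, z j < 1)
    {i : ℕ} (hi : 1 ≤ i) : Ioo (z i) (z (i + 1)) ⊆ Yset 0 := by
  rw [Yset_zero]
  exact fun x hx => ⟨(hz1 ▸ hz hi).trans hx.1.le, hx.2.trans (hzlt _)⟩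

lemma measure_branchEnd (hz : Monotone z) (hz1 : z 1 = 1 / 2) (hzlt : ∀ j, z j < 1)
    (hdens : ∀ s ⊆ Yset 0, MeasurableSet s → μ s = η 0 * volume s)
    {c : ℝ} (hc : c ≤ 1) {i : ℕ} (hi : 1 ≤ i) :
    μ (branchEnd z c i) = η 0 * ENNReal.ofReal (c * (z (i + 1) - z i)) := by
  rw [hdens _ ((branchEnd_subset_Ioo hz hc i).trans (Ioo_subset_Yset_zero hz hz1 hzlt hi))
    measurableSet_Ioo, branchEnd, Real.volume_Ioo, sub_sub_cancel]

lemma mapsTo_branchEnd_Yset (hz : StrictMono z)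
    (hTj : ∀ j : ℕ, 1 ≤ j → ∀ x ∈ Ioo (z j) (z (j + 1)), T x = 1 - slopeZ z j * (x - z j))
    (k : ℕ) : MapsTo T (branchEnd z (2 ^ (-(k : ℤ)) / 2) (k + 1)) (Yset k) := by
  set a : ℝ := 2 ^ (-(k : ℤ)) with ha
  have ha0 : 0 < a := zpow_pos two_pos _
  have ha1 : a ≤ 1 := zpow_le_one_of_nonpos₀ one_le_two (by omega)
  have hpq : z (k + 1) < z (k + 1 + 1) := hz (Nat.lt_succ_self _)
  intro x hx
  have hxZ := branchEnd_subset_Ioo hz.monotone (by linarith) (k + 1) hx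
  rw [hTj (k + 1) (by omega) x hxZ, slopeZ, two_zpow_neg_succ, ← ha, Yset_eq, ← ha]
  refine ⟨(lt_one_sub_div_mul_sub hpq (by linarith) hxZ.2).le, ?_⟩
  rw [one_sub_div_mul_sub_lt_iff hpq (by linarith)]
  refine lt_of_le_of_lt ?_ hx.1
  have : a / 2 * (z (k + 1 + 1) - z (k + 1)) ≤
      (z (k + 1 + 1) - z (k + 1)) * (a - a / 2) / (1 - a / 2) := by
    rw [le_div_iff₀ (by linarith)]
    nlinarith [mul_pos (mul_pos ha0 ha0) (sub_pos.2 hpq)]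
  linarith

lemma ofReal_mul_le_measure_Yset (hz : StrictMono z) (hz1 : z 1 = 1 / 2) (hzlt : ∀ j, z j < 1)
    (hTj : ∀ j : ℕ, 1 ≤ j → ∀ x ∈ Ioo (z j) (z (j + 1)), T x = 1 - slopeZ z j * (x - z j))
    (hinv : MeasurePreserving T μ μ)
    (hdens : ∀ s ⊆ Yset 0, MeasurableSet s → μ s = η 0 * volume s) (k : ℕ) :
    η 0 * ENNReal.ofReal (2 ^ (-(k : ℤ) - 1) * (z (k + 2) - z (k + 1))) ≤ μ (Yset k) := by
  have hc : (2 : ℝ) ^ (-(k : ℤ)) / 2 ≤ 1 := by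
    linarith [zpow_le_one_of_nonpos₀ (one_le_two (α := ℝ)) (neg_nonpos.2 (Nat.cast_nonneg k))]
  rw [two_zpow_neg_sub_one, ← measure_branchEnd hz.monotone hz1 hzlt hdens hc (by omega),
    ← hinv.measure_preimage (measurableSet_Yset k).nullMeasurableSet]
  exact measure_mono (mapsTo_branchEnd_Yset hz hTj k)

lemma add_two_le_and_mem_branchEnd (hz : StrictMono z)
    (hTj : ∀ j : ℕ, 1 ≤ j → ∀ x ∈ Ioo (z j) (z (j + 1)), T x = 1 - slopeZ z j * (x - z j))
    {i k : ℕ} (hi : 1 ≤ i) {x : ℝ} (hx : x ∈ Ioo (z i) (z (i + 1)))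
    (hTx : T x < 2 ^ (-(k : ℤ)) / 2) : k + 2 ≤ i ∧ x ∈ branchEnd z (2 ^ (-(k : ℤ))) i := by
  set a : ℝ := 2 ^ (-(k : ℤ)) with ha
  set b : ℝ := 2 ^ (-(i : ℤ)) with hb
  have hb0 : 0 < b := zpow_pos two_pos _
  have hb1 : b ≤ 1 / 2 :=
    calc b ≤ 2 ^ (-1 : ℤ) := zpow_le_zpow_right₀ one_le_two (by omega)
      _ = 1 / 2 := by norm_num
  have hpq : z i < z (i + 1) := hz (Nat.lt_succ_self i)
  rw [hTj i hi x hx, slopeZ, ← hb] at hTx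
  have hba : b < a / 2 := (lt_one_sub_div_mul_sub hpq (by linarith) hx.2).trans hTx
  refine ⟨?_, ?_, hx.2⟩
  · rw [ha, ← two_zpow_neg_sub_one, hb, zpow_lt_zpow_iff_right₀ one_lt_two] at hba
    omega
  · rw [one_sub_div_mul_sub_lt_iff hpq (by linarith)] at hTx
    refine lt_of_le_of_lt ?_ hTx
    have : (z (i + 1) - z i) * (a / 2 - b) / (1 - b) ≤ a * (z (i + 1) - z i) := by
      rw [div_le_iff₀ (by linarith)]
      have ha0 : 0 < a := zpow_pos two_pos _
      nlinarith [mul_pos hb0 (sub_pos.2 hpq), mul_pos ha0 (sub_pos.2 hpq)]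
    linarith

lemma preimage_Ico_zero_subset (hz : StrictMono z) (hz1 : z 1 = 1 / 2)
    (hzlim : Tendsto z atTop (𝓝 1)) (hT0 : ∀ x ∈ Ico (0 : ℝ) (1 / 2), T x = 2 * x)
    (hTj : ∀ j : ℕ, 1 ≤ j → ∀ x ∈ Ioo (z j) (z (j + 1)), T x = 1 - slopeZ z j * (x - z j))
    (k : ℕ) :
    T ⁻¹' Ico 0 (2 ^ (-(k : ℤ)) / 2) ⊆
      ((Ico 0 (2 ^ (-(k : ℤ)) / 4) ∪ ⋃ r, branchEnd z (2 ^ (-(k : ℤ))) (k + 2 + r)) ∪ range z) ∪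
        (Ico 0 1)ᶜ := by
  intro x hx
  by_cases h01 : x ∈ Ico (0 : ℝ) 1
  swap
  · exact Or.inr h01
  rcases lt_or_ge x (1 / 2) with hlow | hhigh
  · have hTx : T x = 2 * x := hT0 x ⟨h01.1, hlow⟩
    have := hx.2
    rw [hTx] at this
    exact Or.inl (Or.inl (Or.inl ⟨h01.1, by linarith⟩))
  obtain ⟨i, hzi, hxi⟩ := exists_mem_Ico_of_tendsto (z := fun n => z (n + 1))
    ((tendsto_add_atTop_iff_nat 1).2 hzlim) (by simpa [hz1] using hhigh) h01.2
  rcases hzi.eq_or_lt with heq | hlt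
  · exact Or.inl (Or.inr ⟨i + 1, heq⟩)
  obtain ⟨hik, hmem⟩ :=
    add_two_le_and_mem_branchEnd hz hTj (i := i + 1) (by omega) ⟨hlt, hxi⟩ hx.2
  refine Or.inl (Or.inl (Or.inr (mem_iUnion.2 ⟨i + 1 - (k + 2), ?_⟩)))
  rwa [show k + 2 + (i + 1 - (k + 2)) = i + 1 by omega]

lemma measure_Yset_succ_le [IsFiniteMeasure μ] (hz : StrictMono z) (hz1 : z 1 = 1 / 2)
    (hzlt : ∀ j, z j < 1) (hzlim : Tendsto z atTop (𝓝 1))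
    (hT0 : ∀ x ∈ Ico (0 : ℝ) (1 / 2), T x = 2 * x)
    (hTj : ∀ j : ℕ, 1 ≤ j → ∀ x ∈ Ioo (z j) (z (j + 1)), T x = 1 - slopeZ z j * (x - z j))
    (hac : μ ≪ volume) (hsupp : μ (Ico (0 : ℝ) 1)ᶜ = 0) (hinv : MeasurePreserving T μ μ)
    (hdens : ∀ s ⊆ Yset 0, MeasurableSet s → μ s = η 0 * volume s) (k : ℕ) :
    μ (Yset (k + 1)) ≤ η 0 * ENNReal.ofReal (2 ^ (-(k : ℤ))) *
      ∑' r, ENNReal.ofReal (z (k + 2 + r + 1) - z (k + 2 + r)) := by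
  set a : ℝ := 2 ^ (-(k : ℤ)) with ha
  have ha0 : 0 < a := zpow_pos two_pos _
  have ha1 : a ≤ 1 := zpow_le_one_of_nonpos₀ one_le_two (by omega)
  have hsplit : μ (Ico 0 (a / 4)) + μ (Yset (k + 1)) = μ (Ico 0 (a / 2)) := by
    rw [Yset_succ_eq, ← ha, ← measure_union Ico_disjoint_Ico_same measurableSet_Ico,
      Ico_union_Ico_eq_Ico (by positivity) (by linarith)]
  have hnull : μ (range z) = 0 := hac ((countable_range z).measure_zero _)
  have hbound : μ (Ico 0 (a / 2)) ≤ μ (Ico 0 (a / 4)) +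
      η 0 * ENNReal.ofReal a * ∑' r, ENNReal.ofReal (z (k + 2 + r + 1) - z (k + 2 + r)) :=
    calc μ (Ico 0 (a / 2)) = μ (T ⁻¹' Ico 0 (a / 2)) :=
          (hinv.measure_preimage measurableSet_Ico.nullMeasurableSet).symm
      _ ≤ μ (Ico 0 (a / 4)) + ∑' r, μ (branchEnd z a (k + 2 + r)) := by
          refine (measure_mono (preimage_Ico_zero_subset hz hz1 hzlim hT0 hTj k)).trans ?_
          refine (measure_union_le _ _).trans ?_
          rw [hsupp, add_zero]
          refine (measure_union_le _ _).trans ?_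
          rw [hnull, add_zero]
          exact (measure_union_le _ _).trans (add_le_add le_rfl (measure_iUnion_le _))
      _ = _ := by
          rw [← ENNReal.tsum_mul_left]
          congr 1
          refine tsum_congr fun r => ?_
          rw [measure_branchEnd hz.monotone hz1 hzlt hdens ha1 (by omega),
            ENNReal.ofReal_mul ha0.le, mul_assoc]
  rw [← hsplit] at hbound
  exact (ENNReal.add_le_add_iff_left (measure_ne_top μ _)).1 hbound

lemma measure_Yset_succ_le_of_fast_decay [IsFiniteMeasure μ] (hz : StrictMono z)
    (hz1 : z 1 = 1 / 2) (hzlt : ∀ j, z j < 1) (hzlim : Tendsto z atTop (𝓝 1))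
    (hT0 : ∀ x ∈ Ico (0 : ℝ) (1 / 2), T x = 2 * x)
    (hTj : ∀ j : ℕ, 1 ≤ j → ∀ x ∈ Ioo (z j) (z (j + 1)), T x = 1 - slopeZ z j * (x - z j))
    (hac : μ ≪ volume) (hsupp : μ (Ico (0 : ℝ) 1)ᶜ = 0) (hinv : MeasurePreserving T μ μ)
    (hdens : ∀ s ⊆ Yset 0, MeasurableSet s → μ s = η 0 * volume s) {k0 : ℕ}
    (hfast : ∀ i : ℕ, k0 ≤ i →
      z (i + 2) - z (i + 1) ≤ (2 : ℝ) ^ (-(i : ℤ) - 3) * (z (i + 1) - z i))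
    {k : ℕ} (hk : k0 ≤ k) : μ (Yset (k + 1)) ≤ 2⁻¹ ^ (k + 1) * μ (Yset k) := by
  set ℓ : ℕ → ℝ≥0∞ := fun i => ENNReal.ofReal (z (i + 1) - z i)
  have hdecay : ∀ i, k0 ≤ i → ℓ (i + 1) ≤ 2⁻¹ ^ (i + 3) * ℓ i := by
    intro i hi
    calc ℓ (i + 1) ≤ ENNReal.ofReal ((2 : ℝ) ^ (-(i : ℤ) - 3) * (z (i + 1) - z i)) :=
          ENNReal.ofReal_le_ofReal (hfast i hi)
      _ = 2⁻¹ ^ (i + 3) * ℓ i := by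
          rw [ENNReal.ofReal_mul (zpow_pos two_pos _).le,
            show -(i : ℤ) - 3 = -((i + 3 : ℕ) : ℤ) by push_cast; ring,
            ENNReal.ofReal_two_zpow_neg]
  have hhalf : ∀ n, 2⁻¹ ^ (n + 3) ≤ (2⁻¹ : ℝ≥0∞) := fun n => by
    simpa using pow_le_pow_right_of_le_one' (a := (2⁻¹ : ℝ≥0∞)) (by norm_num)
      (Nat.le_add_left 1 (n + 2))
  have htail : ∑' r, ℓ (k + 2 + r) ≤ 2 * ℓ (k + 2) :=
    ENNReal.tsum_le_two_mul_of_le_inv_two_mul fun r =>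
      (hdecay (k + 2 + r) (by omega)).trans (mul_le_mul_left (hhalf _) _)
  have hlower := ofReal_mul_le_measure_Yset hz hz1 hzlt hTj hinv hdens k
  rw [ENNReal.ofReal_mul (zpow_pos two_pos _).le,
    show -(k : ℤ) - 1 = -((k + 1 : ℕ) : ℤ) by push_cast; ring, ENNReal.ofReal_two_zpow_neg,
    ← mul_assoc] at hlower
  calc μ (Yset (k + 1)) ≤ η 0 * 2⁻¹ ^ k * ∑' r, ℓ (k + 2 + r) := by
        simpa only [ENNReal.ofReal_two_zpow_neg] using
          measure_Yset_succ_le hz hz1 hzlt hzlim hT0 hTj hac hsupp hinv hdens k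
    _ ≤ η 0 * 2⁻¹ ^ k * (2 * (2⁻¹ ^ (k + 1 + 3) * ℓ (k + 1))) := by
        gcongr
        exact htail.trans (by gcongr; exact hdecay (k + 1) (by omega))
    _ = 2⁻¹ ^ (k + 2) * (η 0 * 2⁻¹ ^ (k + 1) * ℓ (k + 1)) := by
        rw [ENNReal.two_mul_inv_two_pow_succ_mul]
        ring
    _ ≤ 2⁻¹ ^ (k + 1) * μ (Yset k) :=
        mul_le_mul' (pow_le_pow_right_of_le_one' (by norm_num) (Nat.le_succ _)) hlower

end Branches

theorem stmt15_general (z : ℕ → ℝ) (hz : StrictMono z) (hz1 : z 1 = 1 / 2)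
    (hzlt : ∀ j, z j < 1) (hzlim : Tendsto z atTop (𝓝 1))
    (T : ℝ → ℝ) (hT0 : ∀ x ∈ Set.Ico (0 : ℝ) (1 / 2), T x = 2 * x)
    (hTj : ∀ j : ℕ, 1 ≤ j → ∀ x ∈ Set.Ioo (z j) (z (j + 1)),
      T x = 1 - slopeZ z j * (x - z j))
    (μ : Measure ℝ) [IsProbabilityMeasure μ] (hac : μ ≪ volume)
    (hsupp : μ (Set.Ico (0 : ℝ) 1)ᶜ = 0) (hinv : MeasurePreserving T μ μ)
    (η : ℕ → ℝ≥0∞)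
    (hdens : ∀ j : ℕ, ∀ s ⊆ Yset j, MeasurableSet s → μ s = η j * volume s)
    (k0 : ℕ)
    (hfast : ∀ i : ℕ, k0 ≤ i →
      z (i + 2) - z (i + 1) ≤ (2 : ℝ) ^ (-(i : ℤ) - 3) * (z (i + 1) - z i)) :
    (∀ k : ℕ, k0 ≤ k →
        μ (Yset (k + 1)) ≤ ENNReal.ofReal ((2 : ℝ) ^ (-(k : ℤ) - 1)) * μ (Yset k)) ∧
      Tendsto (fun k : ℕ =>
          (∑' j : ℕ, if k < j then μ (Yset j) else 0).toReal / (μ (Yset k)).toReal)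
        atTop (𝓝 0) := by
  have hhalf : ∀ k, k0 ≤ k → μ (Yset (k + 1)) ≤ 2⁻¹ ^ (k + 1) * μ (Yset k) := fun _ hk =>
    measure_Yset_succ_le_of_fast_decay hz hz1 hzlt hzlim hT0 hTj hac hsupp hinv (hdens 0) hfast hk
  refine ⟨fun k hk => ?_, ENNReal.tendsto_tsum_tail_div_of_le_inv_two_pow_mul hhalf⟩
  rw [show -(k : ℤ) - 1 = -((k + 1 : ℕ) : ℤ) by push_cast; ring, ENNReal.ofReal_two_zpow_neg]
  exact hhalf k hk

/-- **Fast decay of cylinder lengths forces fast decay of `μ(Y_j)`.**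
In the piecewise affine example: if `λ_{i+1} ≤ 2^{-(i+3)} λ_i` for `i ≥ k_0`
(`λ_i = z_{i+1} - z_i`), then `μ(Y_{k+1}) ≤ 2^{-(k+1)} μ(Y_k)` for `k ≥ k_0`, and
consequently `Σ_{j>k} μ(Y_j) = o(μ(Y_k))` as `k → ∞`. -/
theorem stmt15 (z : ℕ → ℝ) (hz : StrictMono z) (hz0 : z 0 = 0) (hz1 : z 1 = 1 / 2)
    (hzlt : ∀ j, z j < 1) (hzlim : Tendsto z atTop (𝓝 1))
    (hs : ∃ ρ : ℝ, 1 < ρ ∧ ∀ j : ℕ, 1 ≤ j → ρ ≤ slopeZ z j)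
    (T : ℝ → ℝ) (hT0 : ∀ x ∈ Set.Ico (0 : ℝ) (1 / 2), T x = 2 * x)
    (hTj : ∀ j : ℕ, 1 ≤ j → ∀ x ∈ Set.Ioo (z j) (z (j + 1)),
      T x = 1 - slopeZ z j * (x - z j))
    (hmaps : Set.MapsTo T (Set.Ico (0 : ℝ) 1) (Set.Ico (0 : ℝ) 1))
    (μ : Measure ℝ) [IsProbabilityMeasure μ] (hac : μ ≪ volume)
    (hsupp : μ (Set.Ico (0 : ℝ) 1)ᶜ = 0) (hinv : MeasurePreserving T μ μ)
    (η : ℕ → ℝ≥0∞)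
    (hdens : ∀ j : ℕ, ∀ s ⊆ Yset j, MeasurableSet s → μ s = η j * volume s)
    (k0 : ℕ) (hk0 : 1 ≤ k0)
    (hfast : ∀ i : ℕ, k0 ≤ i →
      z (i + 2) - z (i + 1) ≤ (2 : ℝ) ^ (-(i : ℤ) - 3) * (z (i + 1) - z i)) :
    (∀ k : ℕ, k0 ≤ k →
        μ (Yset (k + 1)) ≤ ENNReal.ofReal ((2 : ℝ) ^ (-(k : ℤ) - 1)) * μ (Yset k)) ∧
      Tendsto (fun k : ℕ =>
          (∑' j : ℕ, if k < j then μ (Yset j) else 0).toReal / (μ (Yset k)).toReal)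
        atTop (𝓝 0) :=
  stmt15_general z hz hz1 hzlt hzlim T hT0 hTj μ hac hsupp hinv η hdens k0 hfast
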